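/- Unitary covariance of tensor enumerators: let M₁, M₂ be Hermitian q^n×q^n complex matrices, U = U₁⊗⋯⊗Uₙ a local unitary on (ℂ^q)^{⊗n}, and J ⊆ {1,…,n}. With U_J = ⊗_{j∈J} Uⱼ, the tensor enumerator satisfies A^{(J)}(z; U M₁ U†, U M₂ U†) = Λ(U_J)(A^{(J)}(z; M₁, M₂)), i.e. for all e, e' ∈ ((ℤ/qℤ)²)^J, A^{(J)}(z; UM₁U†, UM₂U†)(e,e') = Σ_{g,g'} conj(c(g,e))·c(g',e')·A^{(J)}(z; M₁,M₂)(g,g'). -/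
import Mathlib


open Matrix Polynomial
open scoped BigOperators ComplexConjugate Kronecker

set_option maxHeartbeats 1000000

noncomputable section

/-- Generalized Pauli `X` (cyclic shift) on `ℂ^q`. -/
def Xmat (q : ℕ) : Matrix (Fin q) (Fin q) ℂ :=
  fun i j => if (i : ℕ) = ((j : ℕ) + 1) % q then 1 else 0

/-- Generalized Pauli `Z` (clock) on `ℂ^q`, `Z|j⟩ = ζ^j |j⟩` with `ζ = exp(2πi/q)`. -/
def Zmat (q : ℕ) : Matrix (Fin q) (Fin q) ℂ :=
  Matrix.diagonal fun j => Complex.exp (2 * (Real.pi : ℂ) * Complex.I / (q : ℂ)) ^ (j : ℕ)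

/-- Single-qudit Pauli `E(a,b) = X^a Z^b` for a label `(a,b) ∈ (ℤ/qℤ)²`. -/
def Epauli (q : ℕ) (p : ZMod q × ZMod q) : Matrix (Fin q) (Fin q) ℂ :=
  Xmat q ^ p.1.val * Zmat q ^ p.2.val

/-- Multi-qudit Pauli `E(p) = E(p₁) ⊗ ⋯ ⊗ E(pₙ)` on the space indexed by `ι → Fin q`. -/
def EV (q : ℕ) {ι : Type} [Fintype ι] (p : ι → ZMod q × ZMod q) :
    Matrix (ι → Fin q) (ι → Fin q) ℂ :=
  fun v w => ∏ i, Epauli q (p i) (v i) (w i)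

/-- Weight of a Pauli label vector: the number of non-identity factors. -/
def wtL (q : ℕ) {ι : Type} [Fintype ι] (p : ι → ZMod q × ZMod q) : ℕ :=
  (Finset.univ.filter fun i => p i ≠ 0).card

/-- Kronecker (tensor) product of a family of local `q × q` matrices. -/
def kron (q : ℕ) {ι : Type} [Fintype ι] (Us : ι → Matrix (Fin q) (Fin q) ℂ) :
    Matrix (ι → Fin q) (ι → Fin q) ℂ :=
  fun v w => ∏ i, Us i (v i) (w i)

/-- Combine a label on legs `J` and a label on the complementary legs into a full label. -/
def glue {ι α : Type} [Fintype ι] [DecidableEq ι] (J : Finset ι)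
    (e : {j // j ∈ J} → α) (f : {j // j ∈ Jᶜ} → α) : ι → α :=
  fun i => if h : i ∈ J then e ⟨i, h⟩ else f ⟨i, Finset.mem_compl.mpr h⟩

/-- Tensor weight enumerator `A^{(J)}(z; M₁, M₂)`, valued in `ℂ[z]`. -/
def tA (q : ℕ) [NeZero q] {ι : Type} [Fintype ι] [DecidableEq ι] (J : Finset ι)
    (M₁ M₂ : Matrix (ι → Fin q) (ι → Fin q) ℂ)
    (e e' : {j // j ∈ J} → ZMod q × ZMod q) : Polynomial ℂ :=
  ∑ f : {j // j ∈ Jᶜ} → ZMod q × ZMod q,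
    Polynomial.C (Matrix.trace ((EV q (glue J e f))ᴴ * M₁) *
        Matrix.trace (EV q (glue J e' f) * M₂)) * Polynomial.X ^ wtL q f

/-- Tensor weight enumerator `B^{(J)}(z; M₁, M₂)`, valued in `ℂ[z]`. -/
def tB (q : ℕ) [NeZero q] {ι : Type} [Fintype ι] [DecidableEq ι] (J : Finset ι)
    (M₁ M₂ : Matrix (ι → Fin q) (ι → Fin q) ℂ)
    (e e' : {j // j ∈ J} → ZMod q × ZMod q) : Polynomial ℂ :=
  ∑ f : {j // j ∈ Jᶜ} → ZMod q × ZMod q,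
    Polynomial.C (Matrix.trace ((EV q (glue J e f))ᴴ * M₁ * EV q (glue J e' f) * M₂)) *
      Polynomial.X ^ wtL q f

/-- Coefficients `c(g,e) = q^{-|ι|} · Tr(E(g)† V† E(e) V)` of the adjoint action. -/
def cCoef (q : ℕ) {ι : Type} [Fintype ι] [DecidableEq ι]
    (V : Matrix (ι → Fin q) (ι → Fin q) ℂ) (g e : ι → ZMod q × ZMod q) : ℂ :=
  ((q : ℂ) ^ Fintype.card ι)⁻¹ * Matrix.trace ((EV q g)ᴴ * Vᴴ * EV q e * V)

/-- Adjoint ("Bloch-sphere") action `Λ(V)` on polynomial-valued tensors. -/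
def Lam (q : ℕ) [NeZero q] {ι : Type} [Fintype ι] [DecidableEq ι]
    (V : Matrix (ι → Fin q) (ι → Fin q) ℂ)
    (T : (ι → ZMod q × ZMod q) → (ι → ZMod q × ZMod q) → Polynomial ℂ)
    (e e' : ι → ZMod q × ZMod q) : Polynomial ℂ :=
  ∑ g, ∑ g', Polynomial.C ((starRingEnd ℂ) (cCoef q V g e) * cCoef q V g' e') * T g g'

def zq (q : ℕ) : ℂ := Complex.exp (2 * (Real.pi : ℂ) * Complex.I / (q : ℂ))

variable {q : ℕ}

lemma zq_pow_q [NeZero q] : zq q ^ q = 1 :=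
  (Complex.isPrimitiveRoot_exp q (NeZero.ne q)).pow_eq_one

lemma conj_zq_mul [NeZero q] : (starRingEnd ℂ) (zq q) * zq q = 1 := by
  rw [zq, ← Complex.exp_conj, ← Complex.exp_add]
  have : (starRingEnd ℂ) (2 * (Real.pi : ℂ) * Complex.I / (q : ℂ)) +
      2 * (Real.pi : ℂ) * Complex.I / (q : ℂ) = 0 := by
    simp only [map_div₀, _root_.map_mul, Complex.conj_I, Complex.conj_ofReal, map_ofNat,
      map_natCast]
    ring
  rw [this, Complex.exp_zero]

lemma conj_zq [NeZero q] : (starRingEnd ℂ) (zq q) = zq q ^ (q - 1) := by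
  have h1 : zq q * zq q ^ (q - 1) = 1 := by
    rw [← pow_succ']
    have : q - 1 + 1 = q := Nat.succ_pred_eq_of_pos (NeZero.pos q)
    rw [this, zq_pow_q]
  calc (starRingEnd ℂ) (zq q) = (starRingEnd ℂ) (zq q) * (zq q * zq q ^ (q - 1)) := by
        rw [h1, mul_one]
    _ = ((starRingEnd ℂ) (zq q) * zq q) * zq q ^ (q - 1) := by ring
    _ = zq q ^ (q - 1) := by rw [conj_zq_mul, one_mul]

lemma zq_pow_eq_one_iff [NeZero q] (m : ℕ) : zq q ^ m = 1 ↔ q ∣ m :=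
  (Complex.isPrimitiveRoot_exp q (NeZero.ne q)).pow_eq_one_iff_dvd m

lemma phase_core [NeZero q] (m m' : ℕ) (hm : m < q) (hm' : m' < q) :
    ∑ x ∈ Finset.range q, zq q ^ (x * m) * (starRingEnd ℂ) (zq q ^ (x * m')) =
      if m = m' then (q : ℂ) else 0 := by
  have hterm : ∀ x, zq q ^ (x * m) * (starRingEnd ℂ) (zq q ^ (x * m')) =
      (zq q ^ (m + (q - 1) * m')) ^ x := by
    intro x
    rw [map_pow, conj_zq, ← pow_mul, ← pow_add, ← pow_mul]
    congr 1
    ring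
  simp only [hterm]
  have hdvd : q ∣ m + (q - 1) * m' ↔ m = m' := by
    rw [← ZMod.natCast_eq_zero_iff]
    push_cast [Nat.cast_sub (NeZero.one_le (n := q))]
    rw [ZMod.natCast_self]
    constructor
    · intro h
      have : (m : ZMod q) = (m' : ZMod q) := by linear_combination h
      have := congrArg ZMod.val this
      rwa [ZMod.val_natCast_of_lt hm, ZMod.val_natCast_of_lt hm'] at this
    · intro h; subst h; ring
  by_cases hmm : m = m'
  · subst hmm
    have : zq q ^ (m + (q - 1) * m) = 1 := by
      rw [zq_pow_eq_one_iff]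
      exact hdvd.mpr rfl
    simp [this]
  · have hx1 : zq q ^ (m + (q - 1) * m') ≠ 1 := by
      rw [Ne, zq_pow_eq_one_iff, hdvd]; exact hmm
    rw [geom_sum_eq hx1, ← pow_mul, mul_comm (m + (q-1)*m') q, pow_mul, zq_pow_q,
      one_pow, if_neg hmm]
    simp

lemma zmod_sum_range [NeZero q] (f : ℕ → ℂ) :
    ∑ b : ZMod q, f b.val = ∑ b ∈ Finset.range q, f b := by
  rw [Finset.sum_bij' (fun (b : ZMod q) _ => b.val) (fun (b : ℕ) _ => (b : ZMod q))]
  · intro a ha; exact Finset.mem_range.2 (ZMod.val_lt a)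
  · intro a ha; exact Finset.mem_univ _
  · intro a ha; exact ZMod.natCast_zmod_val a
  · intro a ha; exact ZMod.val_natCast_of_lt (Finset.mem_range.1 ha)
  · intro a ha; rfl

-- ====== Pauli matrix entries ======

lemma Xpow_apply [NeZero q] (a : ℕ) (i j : Fin q) :
    (Xmat q ^ a) i j = if (i : ℕ) = ((j : ℕ) + a) % q then 1 else 0 := by
  induction a generalizing i j with
  | zero =>
    simp only [pow_zero, Matrix.one_apply, Nat.add_zero, Nat.mod_eq_of_lt j.isLt]
    exact if_congr (by rw [Fin.val_inj]) rfl rfl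
  | succ a ih =>
    rw [pow_succ']
    rw [Matrix.mul_apply]
    have hlt : ((j : ℕ) + a) % q < q := Nat.mod_lt _ (NeZero.pos q)
    set m₀ : Fin q := ⟨((j : ℕ) + a) % q, hlt⟩ with hm₀
    have hcond : ∀ m : Fin q, ((m : ℕ) = ((j : ℕ) + a) % q) ↔ m = m₀ := by
      intro m; rw [Fin.ext_iff]
    calc (∑ m, Xmat q i m * (Xmat q ^ a) m j)
        = ∑ m : Fin q, (if (i:ℕ) = ((m:ℕ) + 1) % q then 1 else 0) * (if m = m₀ then 1 else 0) := by
          apply Finset.sum_congr rfl; intro m _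
          rw [ih, Xmat]
          exact congrArg _ (if_congr (hcond m) rfl rfl)
      _ = if (i:ℕ) = ((m₀:ℕ) + 1) % q then 1 else 0 := by
          simp only [mul_ite, mul_one, mul_zero]
          rw [Finset.sum_ite_eq' Finset.univ m₀]
          simp
      _ = if (i:ℕ) = ((j:ℕ) + (a + 1)) % q then 1 else 0 := by
          apply if_congr _ rfl rfl
          have : ((m₀:ℕ) + 1) % q = ((j:ℕ) + (a+1)) % q := by
            rw [hm₀]
            show (((j:ℕ) + a) % q + 1) % q = _
            conv_rhs => rw [show (j:ℕ) + (a+1) = (j:ℕ) + a + 1 by ring]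
            rw [Nat.mod_add_mod]
          rw [this]

lemma Epauli_apply [NeZero q] (p : ZMod q × ZMod q) (i j : Fin q) :
    Epauli q p i j =
      (if (i : ℕ) = ((j : ℕ) + p.1.val) % q then 1 else 0) * zq q ^ ((j : ℕ) * p.2.val) := by
  rw [Epauli, Zmat, Matrix.diagonal_pow, Matrix.mul_diagonal, Xpow_apply]
  congr 1
  rw [Pi.pow_apply, ← pow_mul]
  rfl

-- cast helpers
lemma fin_cast_inj [NeZero q] (i k : Fin q) :
    (((i : ℕ) : ZMod q) = ((k : ℕ) : ZMod q)) ↔ i = k := by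
  constructor
  · intro h
    have := congrArg ZMod.val h
    rwa [ZMod.val_natCast_of_lt i.isLt, ZMod.val_natCast_of_lt k.isLt, Fin.val_inj] at this
  · intro h; rw [h]

lemma ind_cond [NeZero q] (i j : Fin q) (a : ZMod q) :
    ((i : ℕ) = ((j : ℕ) + a.val) % q) ↔ a = ((i : ℕ) : ZMod q) - ((j : ℕ) : ZMod q) := by
  have h1 : ((j : ℕ) + a.val) % q = (((j : ℕ) : ZMod q) + a).val := by
    rw [ZMod.val_add, ZMod.val_natCast_of_lt j.isLt]
  rw [h1]
  constructor
  · intro h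
    have : ((i : ℕ) : ZMod q) = ((j : ℕ) : ZMod q) + a := by
      rw [h, ZMod.natCast_zmod_val]
    rw [eq_sub_iff_add_eq', ← this]
  · intro h
    rw [eq_sub_iff_add_eq'] at h
    rw [h, ZMod.val_natCast_of_lt i.isLt]

lemma ind_sum {α : Type*} [Fintype α] [DecidableEq α] (x y : α) :
    ∑ a : α, (if a = x then (1:ℂ) else 0) * (if a = y then 1 else 0) =
      if x = y then 1 else 0 := by
  rw [Finset.sum_eq_single x]
  · simp
  · intro b _ hb; simp [hb]
  · intro h; exact absurd (Finset.mem_univ x) h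

lemma phase_zmod [NeZero q] (j l : Fin q) :
    ∑ b : ZMod q, zq q ^ ((j:ℕ) * b.val) * (starRingEnd ℂ) (zq q ^ ((l:ℕ) * b.val)) =
      if j = l then (q:ℂ) else 0 := by
  calc ∑ b : ZMod q, zq q ^ ((j:ℕ) * b.val) * (starRingEnd ℂ) (zq q ^ ((l:ℕ) * b.val))
      = ∑ b : ZMod q, zq q ^ (b.val * (j:ℕ)) * (starRingEnd ℂ) (zq q ^ (b.val * (l:ℕ))) := by
        apply Finset.sum_congr rfl; intro b _
        rw [mul_comm ((j:ℕ)), mul_comm ((l:ℕ))]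
    _ = ∑ x ∈ Finset.range q, zq q ^ (x * (j:ℕ)) * (starRingEnd ℂ) (zq q ^ (x * (l:ℕ))) :=
        zmod_sum_range (fun x => zq q ^ (x * (j:ℕ)) * (starRingEnd ℂ) (zq q ^ (x * (l:ℕ))))
    _ = if (j:ℕ) = (l:ℕ) then (q:ℂ) else 0 := phase_core _ _ j.isLt l.isLt
    _ = if j = l then (q:ℂ) else 0 := if_congr Fin.val_inj rfl rfl

lemma phase_fin [NeZero q] (b b' : ZMod q) :
    ∑ j : Fin q, zq q ^ ((j:ℕ) * b.val) * (starRingEnd ℂ) (zq q ^ ((j:ℕ) * b'.val)) =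
      if b = b' then (q:ℂ) else 0 := by
  rw [Fin.sum_univ_eq_sum_range (fun x => zq q ^ (x * b.val) * (starRingEnd ℂ) (zq q ^ (x * b'.val))),
    phase_core _ _ b.val_lt b'.val_lt]
  exact if_congr ⟨fun h => ZMod.val_injective q h, congrArg _⟩ rfl rfl

lemma conj_ind (c : Prop) [Decidable c] :
    (starRingEnd ℂ) (if c then (1:ℂ) else 0) = if c then 1 else 0 := by
  split <;> simp

lemma pauli_complete [NeZero q] (i j k l : Fin q) :
    ∑ p : ZMod q × ZMod q, Epauli q p i j * (starRingEnd ℂ) (Epauli q p k l) =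
      if i = k ∧ j = l then (q:ℂ) else 0 := by
  rw [Fintype.sum_prod_type]
  have hterm : ∀ a b : ZMod q,
      Epauli q (a, b) i j * (starRingEnd ℂ) (Epauli q (a, b) k l) =
      ((if a = ((i:ℕ):ZMod q) - ((j:ℕ):ZMod q) then 1 else 0) *
        (if a = ((k:ℕ):ZMod q) - ((l:ℕ):ZMod q) then 1 else 0)) *
      (zq q ^ ((j:ℕ) * b.val) * (starRingEnd ℂ) (zq q ^ ((l:ℕ) * b.val))) := by
    intro a b
    rw [Epauli_apply, Epauli_apply]
    simp only [_root_.map_mul, conj_ind]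
    rw [if_congr (ind_cond i j a) rfl rfl, if_congr (ind_cond k l a) rfl rfl]
    ring
  calc (∑ a : ZMod q, ∑ b : ZMod q, Epauli q (a, b) i j * (starRingEnd ℂ) (Epauli q (a, b) k l))
      = (∑ a : ZMod q, (if a = ((i:ℕ):ZMod q) - ((j:ℕ):ZMod q) then 1 else 0) *
          (if a = ((k:ℕ):ZMod q) - ((l:ℕ):ZMod q) then 1 else 0)) *
        (∑ b : ZMod q, zq q ^ ((j:ℕ) * b.val) * (starRingEnd ℂ) (zq q ^ ((l:ℕ) * b.val))) := by
        rw [Finset.sum_mul_sum]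
        exact Finset.sum_congr rfl fun a _ => Finset.sum_congr rfl fun b _ => hterm a b
    _ = (if ((i:ℕ):ZMod q) - ((j:ℕ):ZMod q) = ((k:ℕ):ZMod q) - ((l:ℕ):ZMod q) then 1 else 0) *
        (if j = l then (q:ℂ) else 0) := by rw [ind_sum, phase_zmod]
    _ = if i = k ∧ j = l then (q:ℂ) else 0 := by
        by_cases hjl : j = l
        · subst hjl
          by_cases hik : i = k
          · subst hik; simp
          · have : ¬ (((i:ℕ):ZMod q) - ((j:ℕ):ZMod q) = ((k:ℕ):ZMod q) - ((j:ℕ):ZMod q)) := by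
              intro h
              exact hik ((fin_cast_inj i k).mp (by linear_combination h))
            simp [this, hik]
        · simp [hjl]

def finOf (q : ℕ) [NeZero q] (x : ZMod q) : Fin q := ⟨x.val, ZMod.val_lt x⟩

lemma cast_finOf [NeZero q] (x : ZMod q) : (((finOf q x : Fin q) : ℕ) : ZMod q) = x :=
  ZMod.natCast_zmod_val x

lemma finOf_inj [NeZero q] (x y : ZMod q) : finOf q x = finOf q y ↔ x = y := by
  constructor
  · intro h
    have := congrArg (fun t : Fin q => ((t : ℕ) : ZMod q)) h
    simpa only [cast_finOf] using this
  · intro h; rw [h]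

lemma cond_finOf [NeZero q] (j i : Fin q) (a : ZMod q) :
    (a = ((i:ℕ):ZMod q) - ((j:ℕ):ZMod q)) ↔ i = finOf q (((j:ℕ):ZMod q) + a) := by
  rw [eq_sub_iff_add_eq']
  constructor
  · intro h
    rw [h]
    apply Fin.ext
    show (i : ℕ) = (((i:ℕ) : ZMod q)).val
    exact (ZMod.val_natCast_of_lt i.isLt).symm
  · intro h
    rw [h, cast_finOf]

lemma pauli_orth [NeZero q] (p p' : ZMod q × ZMod q) :
    Matrix.trace (Epauli q p * (Epauli q p')ᴴ) = if p = p' then (q:ℂ) else 0 := by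
  have hdiag : ∀ i j : Fin q, Epauli q p i j * (starRingEnd ℂ) (Epauli q p' i j) =
      ((if i = finOf q (((j:ℕ):ZMod q) + p.1) then 1 else 0) *
       (if i = finOf q (((j:ℕ):ZMod q) + p'.1) then 1 else 0)) *
      (zq q ^ ((j:ℕ) * p.2.val) * (starRingEnd ℂ) (zq q ^ ((j:ℕ) * p'.2.val))) := by
    intro i j
    rw [Epauli_apply, Epauli_apply]
    simp only [_root_.map_mul, conj_ind]
    rw [if_congr ((ind_cond i j p.1).trans (cond_finOf j i p.1)) rfl rfl,
      if_congr ((ind_cond i j p'.1).trans (cond_finOf j i p'.1)) rfl rfl]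
    ring
  calc Matrix.trace (Epauli q p * (Epauli q p')ᴴ)
      = ∑ i : Fin q, ∑ j : Fin q, Epauli q p i j * (starRingEnd ℂ) (Epauli q p' i j) := by
        rw [Matrix.trace]
        apply Finset.sum_congr rfl; intro i _
        rw [Matrix.diag_apply, Matrix.mul_apply]
        apply Finset.sum_congr rfl; intro j _
        rw [Matrix.conjTranspose_apply]
        rfl
    _ = ∑ j : Fin q, ∑ i : Fin q, Epauli q p i j * (starRingEnd ℂ) (Epauli q p' i j) :=
        Finset.sum_comm
    _ = ∑ j : Fin q, (if p.1 = p'.1 then (1:ℂ) else 0) *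
          (zq q ^ ((j:ℕ) * p.2.val) * (starRingEnd ℂ) (zq q ^ ((j:ℕ) * p'.2.val))) := by
        apply Finset.sum_congr rfl; intro j _
        simp only [hdiag]
        rw [← Finset.sum_mul, ind_sum]
        congr 2
        rw [finOf_inj]
        exact propext (add_right_inj _)
    _ = (if p.1 = p'.1 then (1:ℂ) else 0) * (if p.2 = p'.2 then (q:ℂ) else 0) := by
        rw [← Finset.mul_sum, phase_fin]
    _ = if p = p' then (q:ℂ) else 0 := by
        by_cases h1 : p.1 = p'.1 <;> by_cases h2 : p.2 = p'.2 <;>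
          simp [h1, h2, Prod.ext_iff]

-- generic trace-entry lemmas
lemma trace_conjT_mul {m : Type*} [Fintype m] (P A : Matrix m m ℂ) :
    Matrix.trace (Pᴴ * A) = ∑ v, ∑ w, (starRingEnd ℂ) (P w v) * A w v := by
  rw [Matrix.trace]
  apply Finset.sum_congr rfl; intro v _
  rw [Matrix.diag_apply, Matrix.mul_apply]
  apply Finset.sum_congr rfl; intro w _
  rw [Matrix.conjTranspose_apply]
  rfl

lemma trace_mul_entries {m : Type*} [Fintype m] (P B : Matrix m m ℂ) :
    Matrix.trace (P * B) = ∑ x, ∑ y, P x y * B y x := by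
  rw [Matrix.trace]
  apply Finset.sum_congr rfl; intro x _
  rw [Matrix.diag_apply, Matrix.mul_apply]

lemma pauli_expand [NeZero q] (A : Matrix (Fin q) (Fin q) ℂ) :
    A = ∑ p : ZMod q × ZMod q,
      ((q:ℂ)⁻¹ * Matrix.trace ((Epauli q p)ᴴ * A)) • Epauli q p := by
  have hq0 : (q:ℂ) ≠ 0 := Nat.cast_ne_zero.mpr (NeZero.ne q)
  ext i j
  rw [Matrix.sum_apply]
  have hinner : ∀ v : Fin q, ∑ w : Fin q, (q:ℂ)⁻¹ * (A w v *
      (if i = w ∧ j = v then (q:ℂ) else 0)) = if j = v then A i v else 0 := by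
    intro v
    rw [Finset.sum_eq_single i]
    · by_cases h : j = v
      · rw [if_pos ⟨rfl, h⟩, if_pos h]
        field_simp
      · simp [h]
    · intro w _ hw
      have : ¬ (i = w ∧ j = v) := fun hc => hw hc.1.symm
      simp [this]
    · intro h; exact absurd (Finset.mem_univ i) h
  calc A i j
      = ∑ v : Fin q, ∑ w : Fin q, (q:ℂ)⁻¹ * (A w v *
          (if i = w ∧ j = v then (q:ℂ) else 0)) := by
        simp only [hinner]
        rw [Finset.sum_ite_eq Finset.univ j (fun v => A i v)]
        simp
    _ = ∑ v : Fin q, ∑ w : Fin q, (q:ℂ)⁻¹ * (A w v *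
          (∑ p : ZMod q × ZMod q, Epauli q p i j * (starRingEnd ℂ) (Epauli q p w v))) := by
        apply Finset.sum_congr rfl; intro v _
        apply Finset.sum_congr rfl; intro w _
        rw [pauli_complete]
    _ = ∑ v : Fin q, ∑ w : Fin q, ∑ p : ZMod q × ZMod q,
          (q:ℂ)⁻¹ * ((starRingEnd ℂ) (Epauli q p w v) * A w v) * Epauli q p i j := by
        apply Finset.sum_congr rfl; intro v _
        apply Finset.sum_congr rfl; intro w _
        rw [Finset.mul_sum, Finset.mul_sum]
        apply Finset.sum_congr rfl; intro p _
        ring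
    _ = ∑ v : Fin q, ∑ p : ZMod q × ZMod q, ∑ w : Fin q,
          (q:ℂ)⁻¹ * ((starRingEnd ℂ) (Epauli q p w v) * A w v) * Epauli q p i j :=
        Finset.sum_congr rfl fun v _ => Finset.sum_comm
    _ = ∑ p : ZMod q × ZMod q, ∑ v : Fin q, ∑ w : Fin q,
          (q:ℂ)⁻¹ * ((starRingEnd ℂ) (Epauli q p w v) * A w v) * Epauli q p i j :=
        Finset.sum_comm
    _ = ∑ p : ZMod q × ZMod q,
          (((q:ℂ)⁻¹ * Matrix.trace ((Epauli q p)ᴴ * A)) • Epauli q p) i j := by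
        apply Finset.sum_congr rfl; intro p _
        rw [Matrix.smul_apply, trace_conjT_mul, smul_eq_mul]
        rw [Finset.mul_sum, Finset.sum_mul]
        apply Finset.sum_congr rfl; intro v _
        rw [Finset.mul_sum, Finset.sum_mul]

lemma pauli_TT [NeZero q] (A B : Matrix (Fin q) (Fin q) ℂ) :
    ∑ p : ZMod q × ZMod q,
        Matrix.trace ((Epauli q p)ᴴ * A) * Matrix.trace (Epauli q p * B) =
      (q:ℂ) * Matrix.trace (A * B) := by
  have hq0 : (q:ℂ) ≠ 0 := Nat.cast_ne_zero.mpr (NeZero.ne q)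
  conv_rhs => rw [pauli_expand (q := q) A]
  rw [Matrix.sum_mul, Matrix.trace_sum, Finset.mul_sum]
  apply Finset.sum_congr rfl; intro p _
  rw [Matrix.smul_mul, Matrix.trace_smul, smul_eq_mul]
  field_simp

-- ====== single-leg adjoint coefficients ======

def cc (q : ℕ) [NeZero q] (U : Matrix (Fin q) (Fin q) ℂ) (g e : ZMod q × ZMod q) : ℂ :=
  (q:ℂ)⁻¹ * Matrix.trace ((Epauli q g)ᴴ * (Uᴴ * Epauli q e * U))

lemma Epauli_zero [NeZero q] : Epauli q 0 = 1 := by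
  simp [Epauli]

lemma trace_Epauli [NeZero q] (p : ZMod q × ZMod q) :
    Matrix.trace (Epauli q p) = if p = 0 then (q:ℂ) else 0 := by
  have h := pauli_orth (q := q) p 0
  rwa [Epauli_zero, Matrix.conjTranspose_one, mul_one] at h

lemma cc_expand [NeZero q] (U : Matrix (Fin q) (Fin q) ℂ) (e : ZMod q × ZMod q) :
    Uᴴ * Epauli q e * U = ∑ g : ZMod q × ZMod q, cc q U g e • Epauli q g := by
  conv_lhs => rw [pauli_expand (q := q) (Uᴴ * Epauli q e * U)]
  rfl

lemma cc_zero [NeZero q] (U : Matrix (Fin q) (Fin q) ℂ)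
    (hU : U ∈ Matrix.unitaryGroup (Fin q) ℂ) (g : ZMod q × ZMod q) :
    cc q U g 0 = if g = 0 then 1 else 0 := by
  have hq0 : (q:ℂ) ≠ 0 := Nat.cast_ne_zero.mpr (NeZero.ne q)
  have hUU : Uᴴ * U = 1 := by
    rw [← Matrix.star_eq_conjTranspose]
    exact (Unitary.mem_iff.mp hU).1
  rw [cc, Epauli_zero, mul_one, hUU, mul_one, Matrix.trace_conjTranspose, trace_Epauli]
  by_cases h : g = 0 <;> simp [h] <;> field_simp

lemma conj_cc [NeZero q] (U : Matrix (Fin q) (Fin q) ℂ) (a p : ZMod q × ZMod q) :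
    (starRingEnd ℂ) (cc q U a p) =
      (q:ℂ)⁻¹ * Matrix.trace ((Epauli q p)ᴴ * (U * (Epauli q a * Uᴴ))) := by
  rw [cc, _root_.map_mul, map_inv₀, map_natCast]
  congr 1
  rw [show (starRingEnd ℂ) (Matrix.trace ((Epauli q a)ᴴ * (Uᴴ * Epauli q p * U))) =
      Matrix.trace (((Epauli q a)ᴴ * (Uᴴ * Epauli q p * U))ᴴ) from
    (Matrix.trace_conjTranspose _).symm]
  simp only [Matrix.conjTranspose_mul, Matrix.conjTranspose_conjTranspose, Matrix.mul_assoc]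
  rw [Matrix.trace_mul_comm]
  simp only [Matrix.mul_assoc]

lemma cc_alt [NeZero q] (U : Matrix (Fin q) (Fin q) ℂ) (b p : ZMod q × ZMod q) :
    cc q U b p = (q:ℂ)⁻¹ * Matrix.trace (Epauli q p * (U * ((Epauli q b)ᴴ * Uᴴ))) := by
  rw [cc]
  congr 1
  rw [Matrix.trace_mul_comm]
  simp only [Matrix.mul_assoc]
  rw [Matrix.trace_mul_comm]
  simp only [Matrix.mul_assoc]

lemma cc_rowOrth [NeZero q] (U : Matrix (Fin q) (Fin q) ℂ)
    (hU : U ∈ Matrix.unitaryGroup (Fin q) ℂ) (a b : ZMod q × ZMod q) :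
    ∑ p : ZMod q × ZMod q, (starRingEnd ℂ) (cc q U a p) * cc q U b p =
      if a = b then 1 else 0 := by
  have hq0 : (q:ℂ) ≠ 0 := Nat.cast_ne_zero.mpr (NeZero.ne q)
  have hUU : Uᴴ * U = 1 := by
    rw [← Matrix.star_eq_conjTranspose]
    exact (Unitary.mem_iff.mp hU).1
  have hcanc : ∀ X : Matrix (Fin q) (Fin q) ℂ, Uᴴ * (U * X) = X := by
    intro X; rw [← Matrix.mul_assoc, hUU, Matrix.one_mul]
  have hterm : ∀ p : ZMod q × ZMod q,
      (starRingEnd ℂ) (cc q U a p) * cc q U b p =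
      (q:ℂ)⁻¹ * ((q:ℂ)⁻¹ *
        (Matrix.trace ((Epauli q p)ᴴ * (U * (Epauli q a * Uᴴ))) *
         Matrix.trace (Epauli q p * (U * ((Epauli q b)ᴴ * Uᴴ))))) := by
    intro p
    rw [conj_cc, cc_alt]
    ring
  simp only [hterm]
  rw [← Finset.mul_sum, ← Finset.mul_sum, pauli_TT]
  have htr : Matrix.trace ((U * (Epauli q a * Uᴴ)) * (U * ((Epauli q b)ᴴ * Uᴴ))) =
      Matrix.trace (Epauli q a * (Epauli q b)ᴴ) := by
    simp only [Matrix.mul_assoc, hcanc]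
    rw [Matrix.trace_mul_comm]
    simp only [Matrix.mul_assoc, hcanc]
    rw [hUU, Matrix.mul_one]
  rw [htr, pauli_orth]
  by_cases h : a = b <;> simp [h] <;> field_simp

-- ====== multi-leg defs (mirror target file) ======

variable {ι : Type} [Fintype ι] [DecidableEq ι]

lemma kron_mul (A B : ι → Matrix (Fin q) (Fin q) ℂ) :
    kron q A * kron q B = kron q (fun i => A i * B i) := by
  ext v w
  rw [Matrix.mul_apply]
  calc ∑ u : ι → Fin q, kron q A v u * kron q B u w
      = ∑ u : ι → Fin q, ∏ i, (A i (v i) (u i) * B i (u i) (w i)) := by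
        apply Finset.sum_congr rfl; intro u _
        rw [kron, kron, ← Finset.prod_mul_distrib]
    _ = ∑ u ∈ Fintype.piFinset (fun _ : ι => (Finset.univ : Finset (Fin q))),
          ∏ i, (A i (v i) (u i) * B i (u i) (w i)) := by rw [Fintype.piFinset_univ]
    _ = ∏ i, ∑ x : Fin q, A i (v i) x * B i x (w i) :=
        (Finset.prod_univ_sum (fun _ => (Finset.univ : Finset (Fin q)))
          (fun i x => A i (v i) x * B i x (w i))).symm
    _ = kron q (fun i => A i * B i) v w := by
        rw [kron]
        apply Finset.prod_congr rfl; intro i _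
        rw [Matrix.mul_apply]

lemma kron_conjT (A : ι → Matrix (Fin q) (Fin q) ℂ) :
    (kron q A)ᴴ = kron q (fun i => (A i)ᴴ) := by
  ext v w
  rw [Matrix.conjTranspose_apply, kron, kron]
  rw [show (star (∏ i, A i (w i) (v i)) : ℂ) = (starRingEnd ℂ) (∏ i, A i (w i) (v i)) from rfl]
  rw [map_prod]
  apply Finset.prod_congr rfl; intro i _
  rw [Matrix.conjTranspose_apply]
  rfl

lemma trace_kron (A : ι → Matrix (Fin q) (Fin q) ℂ) :
    Matrix.trace (kron q A) = ∏ i, Matrix.trace (A i) := by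
  rw [Matrix.trace]
  calc ∑ v : ι → Fin q, (kron q A).diag v
      = ∑ v ∈ Fintype.piFinset (fun _ : ι => (Finset.univ : Finset (Fin q))),
          ∏ i, A i (v i) (v i) := by rw [Fintype.piFinset_univ]; rfl
    _ = ∏ i, ∑ x : Fin q, A i x x :=
        (Finset.prod_univ_sum (fun _ => (Finset.univ : Finset (Fin q)))
          (fun i x => A i x x)).symm
    _ = ∏ i, Matrix.trace (A i) := rfl

lemma EV_kron (p : ι → ZMod q × ZMod q) : EV q p = kron q (fun i => Epauli q (p i)) := rfl

lemma kron_expand [NeZero q] (B : ι → Matrix (Fin q) (Fin q) ℂ)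
    (C : ι → (ZMod q × ZMod q) → ℂ)
    (hB : ∀ i, B i = ∑ g : ZMod q × ZMod q, C i g • Epauli q g) :
    kron q B = ∑ h : ι → ZMod q × ZMod q, (∏ i, C i (h i)) • EV q h := by
  ext v w
  rw [Matrix.sum_apply]
  calc kron q B v w
      = ∏ i, ∑ g : ZMod q × ZMod q, C i g * Epauli q g (v i) (w i) := by
        rw [kron]
        apply Finset.prod_congr rfl; intro i _
        rw [hB i, Matrix.sum_apply]
        apply Finset.sum_congr rfl; intro g _
        rw [Matrix.smul_apply, smul_eq_mul]
    _ = ∑ h ∈ Fintype.piFinset (fun _ : ι => (Finset.univ : Finset (ZMod q × ZMod q))),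
          ∏ i, (C i (h i) * Epauli q (h i) (v i) (w i)) :=
        Finset.prod_univ_sum (fun _ => (Finset.univ : Finset (ZMod q × ZMod q)))
          (fun i g => C i g * Epauli q g (v i) (w i))
    _ = ∑ h : ι → ZMod q × ZMod q, ((∏ i, C i (h i)) • EV q h) v w := by
        rw [Fintype.piFinset_univ]
        apply Finset.sum_congr rfl; intro h _
        rw [Matrix.smul_apply, smul_eq_mul, EV, Finset.prod_mul_distrib]

-- ====== glue machinery ======

def glueEquiv (J : Finset ι) (α : Type) :
    (({j // j ∈ J} → α) × ({j // j ∈ Jᶜ} → α)) ≃ (ι → α) where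
  toFun ge := glue J ge.1 ge.2
  invFun h := (fun j => h j.1, fun j => h j.1)
  left_inv := by
    rintro ⟨g, k⟩
    ext j
    · show glue J g k j.1 = g j
      rw [glue, dif_pos j.2]
    · show glue J g k j.1 = k j
      have hj : j.1 ∉ J := Finset.mem_compl.mp j.2
      rw [glue, dif_neg hj]
  right_inv := by
    intro h
    funext i
    by_cases hi : i ∈ J
    · show glue J _ _ i = h i
      rw [glue, dif_pos hi]
    · show glue J _ _ i = h i
      rw [glue, dif_neg hi]

lemma glue_mem {α : Type} (J : Finset ι) (g : {j // j ∈ J} → α) (k : {j // j ∈ Jᶜ} → α)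
    (j : {j // j ∈ J}) : glue J g k j.1 = g j := by
  rw [glue, dif_pos j.2]

lemma glue_not_mem {α : Type} (J : Finset ι) (g : {j // j ∈ J} → α) (k : {j // j ∈ Jᶜ} → α)
    (j : {j // j ∈ Jᶜ}) : glue J g k j.1 = k j := by
  rw [glue, dif_neg (Finset.mem_compl.mp j.2)]

lemma sum_glue {α : Type} [Fintype α] {M : Type*} [AddCommMonoid M] (J : Finset ι)
    (F : (ι → α) → M) :
    ∑ h : ι → α, F h =
      ∑ g : {j // j ∈ J} → α, ∑ k : {j // j ∈ Jᶜ} → α, F (glue J g k) := by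
  rw [← Equiv.sum_comp (glueEquiv J α) F, Fintype.sum_prod_type]
  rfl

lemma prod_glue2 {α β : Type} {M : Type*} [CommMonoid M] (J : Finset ι)
    (g : {j // j ∈ J} → α) (k : {j // j ∈ Jᶜ} → α)
    (e : {j // j ∈ J} → β) (f : {j // j ∈ Jᶜ} → β)
    (F : ι → α → β → M) :
    ∏ i, F i (glue J g k i) (glue J e f i) =
      (∏ j : {j // j ∈ J}, F j.1 (g j) (e j)) *
      (∏ j : {j // j ∈ Jᶜ}, F j.1 (k j) (f j)) := by
  rw [← Finset.prod_mul_prod_compl J]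
  congr 1
  · rw [Finset.prod_subtype J (fun x => Iff.rfl) (fun i => F i (glue J g k i) (glue J e f i))]
    apply Finset.prod_congr rfl; intro j _
    rw [glue_mem, glue_mem]
  · rw [Finset.prod_subtype Jᶜ (fun x => Iff.rfl) (fun i => F i (glue J g k i) (glue J e f i))]
    apply Finset.prod_congr rfl; intro j _
    rw [glue_not_mem, glue_not_mem]

-- ====== cCoef factorization & conjugated traces ======

lemma cCoef_kron [NeZero q] (Us : ι → Matrix (Fin q) (Fin q) ℂ)
    (g e : ι → ZMod q × ZMod q) :
    cCoef q (kron q Us) g e = ∏ i, cc q (Us i) (g i) (e i) := by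
  rw [cCoef, EV_kron, EV_kron, kron_conjT, kron_conjT, kron_mul, kron_mul, kron_mul,
    trace_kron]
  calc ((q:ℂ) ^ Fintype.card ι)⁻¹ *
        ∏ i, Matrix.trace ((Epauli q (g i))ᴴ * (Us i)ᴴ * Epauli q (e i) * Us i)
      = (∏ _i : ι, (q:ℂ)⁻¹) *
        ∏ i, Matrix.trace ((Epauli q (g i))ᴴ * (Us i)ᴴ * Epauli q (e i) * Us i) := by
        rw [Finset.prod_const, Finset.card_univ, inv_pow]
    _ = ∏ i, ((q:ℂ)⁻¹ *
        Matrix.trace ((Epauli q (g i))ᴴ * (Us i)ᴴ * Epauli q (e i) * Us i)) := by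
        rw [Finset.prod_mul_distrib]
    _ = ∏ i, cc q (Us i) (g i) (e i) := by
        apply Finset.prod_congr rfl; intro i _
        rw [cc]
        congr 2
        simp only [Matrix.mul_assoc]

lemma key_conj [NeZero q] (Uf P Q : Matrix (ι → Fin q) (ι → Fin q) ℂ) :
    Matrix.trace (P * (Uf * Q * Ufᴴ)) = Matrix.trace (Ufᴴ * P * Uf * Q) := by
  rw [show P * (Uf * Q * Ufᴴ) = P * (Uf * Q) * Ufᴴ by simp only [Matrix.mul_assoc],
    Matrix.trace_mul_cycle,
    show Ufᴴ * P * (Uf * Q) = Ufᴴ * P * Uf * Q by simp only [Matrix.mul_assoc]]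

lemma conj_EV_expand [NeZero q] (Us : ι → Matrix (Fin q) (Fin q) ℂ)
    (h : ι → ZMod q × ZMod q) :
    (kron q Us)ᴴ * EV q h * kron q Us =
      ∑ H : ι → ZMod q × ZMod q, (∏ i, cc q (Us i) (H i) (h i)) • EV q H := by
  rw [EV_kron, kron_conjT, kron_mul, kron_mul]
  exact kron_expand _ (fun i g => cc q (Us i) g (h i)) (fun i => cc_expand (Us i) (h i))

lemma traceA [NeZero q] (Us : ι → Matrix (Fin q) (Fin q) ℂ)
    (M : Matrix (ι → Fin q) (ι → Fin q) ℂ) (h : ι → ZMod q × ZMod q) :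
    Matrix.trace ((EV q h)ᴴ * (kron q Us * M * (kron q Us)ᴴ)) =
      ∑ H : ι → ZMod q × ZMod q,
        (starRingEnd ℂ) (∏ i, cc q (Us i) (H i) (h i)) *
          Matrix.trace ((EV q H)ᴴ * M) := by
  rw [key_conj]
  rw [show (kron q Us)ᴴ * (EV q h)ᴴ * kron q Us =
      ((kron q Us)ᴴ * EV q h * kron q Us)ᴴ by
    simp only [Matrix.conjTranspose_mul, Matrix.conjTranspose_conjTranspose,
      Matrix.mul_assoc]]
  rw [conj_EV_expand, Matrix.conjTranspose_sum, Matrix.sum_mul, Matrix.trace_sum]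
  apply Finset.sum_congr rfl; intro H _
  rw [Matrix.conjTranspose_smul, Matrix.smul_mul, Matrix.trace_smul, smul_eq_mul]
  rfl

lemma traceB [NeZero q] (Us : ι → Matrix (Fin q) (Fin q) ℂ)
    (M : Matrix (ι → Fin q) (ι → Fin q) ℂ) (h : ι → ZMod q × ZMod q) :
    Matrix.trace (EV q h * (kron q Us * M * (kron q Us)ᴴ)) =
      ∑ H : ι → ZMod q × ZMod q,
        (∏ i, cc q (Us i) (H i) (h i)) * Matrix.trace (EV q H * M) := by
  rw [key_conj, conj_EV_expand, Matrix.sum_mul, Matrix.trace_sum]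
  apply Finset.sum_congr rfl; intro H _
  rw [Matrix.smul_mul, Matrix.trace_smul, smul_eq_mul]

-- ====== per-leg and complement polynomial identities ======

lemma leg_poly [NeZero q] (U : Matrix (Fin q) (Fin q) ℂ)
    (hU : U ∈ Matrix.unitaryGroup (Fin q) ℂ) (a b : ZMod q × ZMod q) :
    ∑ p : ZMod q × ZMod q,
        Polynomial.C ((starRingEnd ℂ) (cc q U a p) * cc q U b p) *
          Polynomial.X ^ (if p ≠ 0 then 1 else 0) =
      (if a = b then (1 : Polynomial ℂ) else 0) *
        Polynomial.X ^ (if a ≠ 0 then 1 else 0) := by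
  have hzero : (starRingEnd ℂ) (cc q U a 0) * cc q U b 0 =
      if a = 0 ∧ b = 0 then (1:ℂ) else 0 := by
    rw [cc_zero U hU, cc_zero U hU, conj_ind]
    by_cases ha : a = 0 <;> by_cases hb : b = 0 <;> simp [ha, hb]
  rw [← Finset.add_sum_erase Finset.univ _ (Finset.mem_univ (0 : ZMod q × ZMod q))]
  have h0 : Polynomial.C ((starRingEnd ℂ) (cc q U a 0) * cc q U b 0) *
      Polynomial.X ^ (if (0 : ZMod q × ZMod q) ≠ 0 then 1 else 0) =
      Polynomial.C (if a = 0 ∧ b = 0 then (1:ℂ) else 0) := by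
    rw [hzero]
    simp only [ne_eq, not_true_eq_false, if_false, pow_zero, mul_one]
  have hrest : ∑ p ∈ Finset.univ.erase (0 : ZMod q × ZMod q),
      Polynomial.C ((starRingEnd ℂ) (cc q U a p) * cc q U b p) *
        Polynomial.X ^ (if p ≠ 0 then 1 else 0) =
      Polynomial.C ((if a = b then (1:ℂ) else 0) - (if a = 0 ∧ b = 0 then 1 else 0)) *
        Polynomial.X := by
    calc ∑ p ∈ Finset.univ.erase (0 : ZMod q × ZMod q),
          Polynomial.C ((starRingEnd ℂ) (cc q U a p) * cc q U b p) *
            Polynomial.X ^ (if p ≠ 0 then 1 else 0)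
        = ∑ p ∈ Finset.univ.erase (0 : ZMod q × ZMod q),
          Polynomial.C ((starRingEnd ℂ) (cc q U a p) * cc q U b p) * Polynomial.X := by
          apply Finset.sum_congr rfl; intro p hp
          rw [if_pos (Finset.ne_of_mem_erase hp), pow_one]
      _ = Polynomial.C (∑ p ∈ Finset.univ.erase (0 : ZMod q × ZMod q),
          (starRingEnd ℂ) (cc q U a p) * cc q U b p) * Polynomial.X := by
          rw [← Finset.sum_mul, map_sum]
      _ = Polynomial.C ((if a = b then (1:ℂ) else 0) - (if a = 0 ∧ b = 0 then 1 else 0)) *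
          Polynomial.X := by
          rw [Finset.sum_erase_eq_sub (Finset.mem_univ _), cc_rowOrth U hU, hzero]
  rw [h0, hrest]
  by_cases hab : a = b
  · subst hab
    by_cases ha : a = 0
    · simp [ha]
    · simp [ha]
  · have : ¬ (a = 0 ∧ b = 0) := fun hc => hab (hc.1.trans hc.2.symm)
    simp [hab, this]

lemma prod_ite_eq_ite {α : Type*} [DecidableEq α] (k k' : ι → α) :
    (∏ i, if k i = k' i then (1 : Polynomial ℂ) else 0) =
      if k = k' then (1 : Polynomial ℂ) else 0 := by
  by_cases h : k = k'
  · subst h; simp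
  · rw [if_neg h]
    obtain ⟨i, hi⟩ := Function.ne_iff.mp h
    exact Finset.prod_eq_zero (Finset.mem_univ i) (if_neg hi)

lemma comp_poly [NeZero q] (Us' : ι → Matrix (Fin q) (Fin q) ℂ)
    (hU : ∀ i, Us' i ∈ Matrix.unitaryGroup (Fin q) ℂ) (k k' : ι → ZMod q × ZMod q) :
    ∑ f : ι → ZMod q × ZMod q,
        Polynomial.C ((starRingEnd ℂ) (∏ i, cc q (Us' i) (k i) (f i)) *
            ∏ i, cc q (Us' i) (k' i) (f i)) * Polynomial.X ^ wtL q f =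
      if k = k' then (Polynomial.X : Polynomial ℂ) ^ wtL q k else 0 := by
  calc ∑ f : ι → ZMod q × ZMod q,
        Polynomial.C ((starRingEnd ℂ) (∏ i, cc q (Us' i) (k i) (f i)) *
            ∏ i, cc q (Us' i) (k' i) (f i)) * Polynomial.X ^ wtL q f
      = ∑ f : ι → ZMod q × ZMod q, ∏ i,
          (Polynomial.C ((starRingEnd ℂ) (cc q (Us' i) (k i) (f i)) * cc q (Us' i) (k' i) (f i)) *
            Polynomial.X ^ (if f i ≠ 0 then 1 else 0)) := by
        apply Finset.sum_congr rfl; intro f _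
        rw [wtL, Finset.card_filter, ← Finset.prod_pow_eq_pow_sum,
          map_prod (starRingEnd ℂ), ← Finset.prod_mul_distrib,
          map_prod (Polynomial.C : ℂ →+* Polynomial ℂ), ← Finset.prod_mul_distrib]
    _ = ∑ f ∈ Fintype.piFinset (fun _ : ι => (Finset.univ : Finset (ZMod q × ZMod q))), ∏ i,
          (Polynomial.C ((starRingEnd ℂ) (cc q (Us' i) (k i) (f i)) * cc q (Us' i) (k' i) (f i)) *
            Polynomial.X ^ (if f i ≠ 0 then 1 else 0)) := by rw [Fintype.piFinset_univ]
    _ = ∏ i, ∑ p : ZMod q × ZMod q,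
          (Polynomial.C ((starRingEnd ℂ) (cc q (Us' i) (k i) p) * cc q (Us' i) (k' i) p) *
            Polynomial.X ^ (if p ≠ 0 then 1 else 0)) :=
        (Finset.prod_univ_sum (fun _ => (Finset.univ : Finset (ZMod q × ZMod q)))
          (fun i p => Polynomial.C ((starRingEnd ℂ) (cc q (Us' i) (k i) p) *
            cc q (Us' i) (k' i) p) * Polynomial.X ^ (if p ≠ 0 then 1 else 0))).symm
    _ = ∏ i, ((if k i = k' i then (1 : Polynomial ℂ) else 0) *
          Polynomial.X ^ (if k i ≠ 0 then 1 else 0)) := by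
        apply Finset.prod_congr rfl; intro i _
        exact leg_poly (Us' i) (hU i) (k i) (k' i)
    _ = (if k = k' then (1 : Polynomial ℂ) else 0) * Polynomial.X ^ wtL q k := by
        rw [Finset.prod_mul_distrib, prod_ite_eq_ite, Finset.prod_pow_eq_pow_sum,
          wtL, Finset.card_filter]
    _ = if k = k' then (Polynomial.X : Polynomial ℂ) ^ wtL q k else 0 := by
        by_cases h : k = k' <;> simp [h]


/-- Unitary covariance of the tensor enumerator `A^{(J)}`:
`A^{(J)}(z; UM₁U†, UM₂U†) = Λ(U_J)(A^{(J)}(z; M₁, M₂))`. -/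
theorem stmt11 (q n : ℕ) [NeZero q] (hq : 2 ≤ q) (hn : 1 ≤ n)
    (M₁ M₂ : Matrix ((Fin n) → Fin q) ((Fin n) → Fin q) ℂ)
    (hM₁ : M₁.IsHermitian) (hM₂ : M₂.IsHermitian)
    (Us : Fin n → Matrix (Fin q) (Fin q) ℂ)
    (hU : ∀ j, Us j ∈ Matrix.unitaryGroup (Fin q) ℂ)
    (J : Finset (Fin n)) :
    tA q J (kron q Us * M₁ * (kron q Us)ᴴ) (kron q Us * M₂ * (kron q Us)ᴴ) =
      Lam q (kron q fun j : {j // j ∈ J} => Us j.val) (tA q J M₁ M₂) := by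
  funext e e'
  calc tA q J (kron q Us * M₁ * (kron q Us)ᴴ) (kron q Us * M₂ * (kron q Us)ᴴ) e e'
      = ∑ f : {j // j ∈ Jᶜ} → ZMod q × ZMod q,
          Polynomial.C
            ((∑ H : Fin n → ZMod q × ZMod q,
                (starRingEnd ℂ) (∏ i, cc q (Us i) (H i) (glue J e f i)) *
                  Matrix.trace ((EV q H)ᴴ * M₁)) *
             (∑ H' : Fin n → ZMod q × ZMod q,
                (∏ i, cc q (Us i) (H' i) (glue J e' f i)) *
                  Matrix.trace (EV q H' * M₂))) * Polynomial.X ^ wtL q f := by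
        apply Finset.sum_congr rfl; intro f _
        rw [traceA, traceB]
    _ = ∑ f : {j // j ∈ Jᶜ} → ZMod q × ZMod q,
          ∑ H : Fin n → ZMod q × ZMod q, ∑ H' : Fin n → ZMod q × ZMod q,
          Polynomial.C
            (((starRingEnd ℂ) (∏ i, cc q (Us i) (H i) (glue J e f i)) *
                Matrix.trace ((EV q H)ᴴ * M₁)) *
             ((∏ i, cc q (Us i) (H' i) (glue J e' f i)) *
                Matrix.trace (EV q H' * M₂))) * Polynomial.X ^ wtL q f := by
        apply Finset.sum_congr rfl; intro f _
        rw [Finset.sum_mul_sum, map_sum, Finset.sum_mul]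
        apply Finset.sum_congr rfl; intro H _
        rw [map_sum, Finset.sum_mul]
    _ = ∑ H : Fin n → ZMod q × ZMod q, ∑ H' : Fin n → ZMod q × ZMod q,
          ∑ f : {j // j ∈ Jᶜ} → ZMod q × ZMod q,
          Polynomial.C
            (((starRingEnd ℂ) (∏ i, cc q (Us i) (H i) (glue J e f i)) *
                Matrix.trace ((EV q H)ᴴ * M₁)) *
             ((∏ i, cc q (Us i) (H' i) (glue J e' f i)) *
                Matrix.trace (EV q H' * M₂))) * Polynomial.X ^ wtL q f := by
        rw [Finset.sum_comm]
        apply Finset.sum_congr rfl; intro H _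
        rw [Finset.sum_comm]
    _ = ∑ g : {j // j ∈ J} → ZMod q × ZMod q, ∑ k : {j // j ∈ Jᶜ} → ZMod q × ZMod q,
          ∑ g' : {j // j ∈ J} → ZMod q × ZMod q, ∑ k' : {j // j ∈ Jᶜ} → ZMod q × ZMod q,
          ∑ f : {j // j ∈ Jᶜ} → ZMod q × ZMod q,
          Polynomial.C
            (((starRingEnd ℂ) (∏ i, cc q (Us i) (glue J g k i) (glue J e f i)) *
                Matrix.trace ((EV q (glue J g k))ᴴ * M₁)) *
             ((∏ i, cc q (Us i) (glue J g' k' i) (glue J e' f i)) *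
                Matrix.trace (EV q (glue J g' k') * M₂))) * Polynomial.X ^ wtL q f := by
        rw [sum_glue J]
        apply Finset.sum_congr rfl; intro g _
        apply Finset.sum_congr rfl; intro k _
        rw [sum_glue J]
    _ = ∑ g : {j // j ∈ J} → ZMod q × ZMod q, ∑ k : {j // j ∈ Jᶜ} → ZMod q × ZMod q,
          ∑ g' : {j // j ∈ J} → ZMod q × ZMod q, ∑ k' : {j // j ∈ Jᶜ} → ZMod q × ZMod q,
          ∑ f : {j // j ∈ Jᶜ} → ZMod q × ZMod q,
          Polynomial.C ((starRingEnd ℂ) (∏ j : {j // j ∈ J}, cc q (Us j.1) (g j) (e j)) *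
              ∏ j : {j // j ∈ J}, cc q (Us j.1) (g' j) (e' j)) *
          (Polynomial.C (Matrix.trace ((EV q (glue J g k))ᴴ * M₁) *
              Matrix.trace (EV q (glue J g' k') * M₂)) *
           (Polynomial.C
              ((starRingEnd ℂ) (∏ j : {j // j ∈ Jᶜ}, cc q (Us j.1) (k j) (f j)) *
                ∏ j : {j // j ∈ Jᶜ}, cc q (Us j.1) (k' j) (f j)) *
            Polynomial.X ^ wtL q f)) := by
        apply Finset.sum_congr rfl; intro g _
        apply Finset.sum_congr rfl; intro k _
        apply Finset.sum_congr rfl; intro g' _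
        apply Finset.sum_congr rfl; intro k' _
        apply Finset.sum_congr rfl; intro f _
        rw [prod_glue2 J g k e f (fun i x y => cc q (Us i) x y),
          prod_glue2 J g' k' e' f (fun i x y => cc q (Us i) x y)]
        rw [_root_.map_mul (starRingEnd ℂ)]
        rw [show ∀ x y z w : ℂ, (x * y) * ((z * w)) = (x * y) * (z * w) from fun _ _ _ _ => rfl]
        simp only [_root_.map_mul (Polynomial.C : ℂ →+* Polynomial ℂ)]
        ring
    _ = ∑ g : {j // j ∈ J} → ZMod q × ZMod q, ∑ k : {j // j ∈ Jᶜ} → ZMod q × ZMod q,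
          ∑ g' : {j // j ∈ J} → ZMod q × ZMod q, ∑ k' : {j // j ∈ Jᶜ} → ZMod q × ZMod q,
          Polynomial.C ((starRingEnd ℂ) (∏ j : {j // j ∈ J}, cc q (Us j.1) (g j) (e j)) *
              ∏ j : {j // j ∈ J}, cc q (Us j.1) (g' j) (e' j)) *
          (Polynomial.C (Matrix.trace ((EV q (glue J g k))ᴴ * M₁) *
              Matrix.trace (EV q (glue J g' k') * M₂)) *
           (if k = k' then (Polynomial.X : Polynomial ℂ) ^ wtL q k else 0)) := by
        apply Finset.sum_congr rfl; intro g _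
        apply Finset.sum_congr rfl; intro k _
        apply Finset.sum_congr rfl; intro g' _
        apply Finset.sum_congr rfl; intro k' _
        rw [← Finset.mul_sum, ← Finset.mul_sum]
        rw [comp_poly (fun j : {j // j ∈ Jᶜ} => Us j.1) (fun j => hU j.1) k k']
    _ = ∑ g : {j // j ∈ J} → ZMod q × ZMod q, ∑ k : {j // j ∈ Jᶜ} → ZMod q × ZMod q,
          ∑ g' : {j // j ∈ J} → ZMod q × ZMod q,
          Polynomial.C ((starRingEnd ℂ) (∏ j : {j // j ∈ J}, cc q (Us j.1) (g j) (e j)) *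
              ∏ j : {j // j ∈ J}, cc q (Us j.1) (g' j) (e' j)) *
          (Polynomial.C (Matrix.trace ((EV q (glue J g k))ᴴ * M₁) *
              Matrix.trace (EV q (glue J g' k) * M₂)) *
           Polynomial.X ^ wtL q k) := by
        apply Finset.sum_congr rfl; intro g _
        apply Finset.sum_congr rfl; intro k _
        apply Finset.sum_congr rfl; intro g' _
        rw [Finset.sum_eq_single k]
        · rw [if_pos rfl]
        · intro k' _ hkk
          rw [if_neg (Ne.symm hkk), mul_zero, mul_zero]
        · intro hk; exact absurd (Finset.mem_univ k) hk
    _ = ∑ g : {j // j ∈ J} → ZMod q × ZMod q, ∑ g' : {j // j ∈ J} → ZMod q × ZMod q,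
          Polynomial.C ((starRingEnd ℂ) (∏ j : {j // j ∈ J}, cc q (Us j.1) (g j) (e j)) *
              ∏ j : {j // j ∈ J}, cc q (Us j.1) (g' j) (e' j)) *
          tA q J M₁ M₂ g g' := by
        apply Finset.sum_congr rfl; intro g _
        rw [Finset.sum_comm]
        apply Finset.sum_congr rfl; intro g' _
        rw [tA, Finset.mul_sum]
    _ = Lam q (kron q fun j : {j // j ∈ J} => Us j.val) (tA q J M₁ M₂) e e' := by
        rw [Lam]
        apply Finset.sum_congr rfl; intro g _
        apply Finset.sum_congr rfl; intro g' _
        rw [cCoef_kron (fun j : {j // j ∈ J} => Us j.val) g e,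
          cCoef_kron (fun j : {j // j ∈ J} => Us j.val) g' e']
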